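/- arXiv:1409.5620 — 2 statements merged into one kernel-verified Lean document; each statement's English description precedes it below -/
import Mathlib

section
/- (Strong locality in D(div), part (i).) Let b ∈ D(div)(X,d,m). Then for every pair of Lipschitz functions f, g on X one has b(f) = b(g) m-almost everywhere on the set {x ∈ X : f(x) = g(x)}. -/
open MeasureTheory Metric Filter Set
open scoped ENNReal NNReal Topology

noncomputable section

namespace DiMarino

/-- Real Lipschitz functions on `X` with bounded support. -/
def Lip0 (X : Type*) [MetricSpace X] : Set (X → ℝ) :=
  {f | (∃ K, LipschitzWith K f) ∧ Bornology.IsBounded (tsupport f)}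

/-- Bounded real Lipschitz functions on `X`. -/
def LipB (X : Type*) [MetricSpace X] : Set (X → ℝ) :=
  {f | (∃ K, LipschitzWith K f) ∧ ∃ M, ∀ x, |f x| ≤ M}

variable {X : Type*} [MetricSpace X]

/-- The Lipschitz constant of `f` on the set `s`, as an element of `ℝ≥0∞`. -/
def lipOn (f : X → ℝ) (s : Set X) : ℝ≥0∞ :=
  ⨆ x ∈ s, ⨆ y ∈ s, edist (f x) (f y) / edist x y

/-- The asymptotic Lipschitz constant `lip_a f (x) = lim_{r→0⁺} Lip (f, B_r(x))`
(the limit is an infimum by monotonicity). -/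
def lipA (f : X → ℝ) (x : X) : ℝ :=
  (⨅ (r : ℝ) (_ : 0 < r), lipOn f (ball x r)).toReal

/-- The asymptotic Lipschitz constant of the restriction `f|_C` at `x`. -/
def lipAOn (f : X → ℝ) (C : Set X) (x : X) : ℝ :=
  (⨅ (r : ℝ) (_ : 0 < r), lipOn f (C ∩ ball x r)).toReal

variable [MeasurableSpace X]

/-- A metric derivation: a linear map from `Lip_0(X,d)` to `L^0(X,m)` satisfying the
Leibniz rule and weak locality `|b(f)| ≤ g · lip_a f`. -/
structure MDerivation (X : Type*) [MetricSpace X] [MeasurableSpace X]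
    (m : Measure X) where
  toFun : (X → ℝ) → X → ℝ
  aemeasurable' : ∀ f ∈ Lip0 X, AEMeasurable (toFun f) m
  map_add' : ∀ f ∈ Lip0 X, ∀ g ∈ Lip0 X, toFun (f + g) =ᵐ[m] toFun f + toFun g
  map_smul' : ∀ (c : ℝ), ∀ f ∈ Lip0 X, toFun (c • f) =ᵐ[m] c • toFun f
  leibniz' : ∀ f ∈ Lip0 X, ∀ g ∈ Lip0 X,
    toFun (f * g) =ᵐ[m] toFun f * g + f * toFun g
  locality' : ∃ g : X → ℝ, AEMeasurable g m ∧ (∀ᵐ x ∂m, 0 ≤ g x) ∧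
    ∀ f ∈ Lip0 X, ∀ᵐ x ∂m, |toFun f x| ≤ g x * lipA f x

/-- `g` is a locality function for the derivation `b`, i.e. `|b(f)| ≤ g · lip_a f`
`m`-a.e. for every `f ∈ Lip_0(X,d)`. -/
def IsLocality (m : Measure X) (b : MDerivation X m) (g : X → ℝ) : Prop :=
  AEMeasurable g m ∧ (∀ᵐ x ∂m, 0 ≤ g x) ∧
    ∀ f ∈ Lip0 X, ∀ᵐ x ∂m, |b.toFun f x| ≤ g x * lipA f x

/-- `g` is the (`m`-a.e.) minimal locality function of `b`; it is denoted `|b|`. -/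
def IsMinimalLocality (m : Measure X) (b : MDerivation X m) (g : X → ℝ) : Prop :=
  IsLocality m b g ∧ ∀ g', IsLocality m b g' → ∀ᵐ x ∂m, g x ≤ g' x

/-- `h` is the divergence of the derivation `b`:
`-∫ b(f) dm = ∫ h f dm` for every `f ∈ Lip_0(X,d)`. -/
def IsDivergence (m : Measure X) (b : MDerivation X m) (h : X → ℝ) : Prop :=
  AEMeasurable h m ∧ ∀ f ∈ Lip0 X, Integrable (b.toFun f) m ∧
    Integrable (fun x => h x * f x) m ∧
    (-∫ x, b.toFun f x ∂m) = ∫ x, h x * f x ∂m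

/-- `Der^{p₁}_{p₂}(X,d,m)`: derivations with `|b| ∈ L^{p₁}` and `div b ∈ L^{p₂}`. -/
def DerSet (m : Measure X) (p₁ p₂ : ℝ≥0∞) : Set (MDerivation X m) :=
  {b | (∃ g, IsLocality m b g ∧ MemLp g p₁ m) ∧ ∃ h, MemLp h p₂ m ∧ IsDivergence m b h}

/-- `Der_b`: derivations with `|b| ∈ L^∞`. -/
def DerB (m : Measure X) : Set (MDerivation X m) :=
  {b | ∃ g, IsLocality m b g ∧ MemLp g ∞ m}

/-- `L^1_loc` in a metric measure space: integrable on bounded sets. -/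
def LocInt (m : Measure X) (g : X → ℝ) : Prop :=
  AEMeasurable g m ∧ ∀ s : Set X, Bornology.IsBounded s → IntegrableOn g s m

/-- `D(div)`: derivations with `|b|` and `div b` in `L^1_loc(X,m)`. -/
def DDiv (m : Measure X) : Set (MDerivation X m) :=
  {b | (∃ g, IsLocality m b g ∧ LocInt m g) ∧ ∃ h, LocInt m h ∧ IsDivergence m b h}

/-- `bu` represents the value `b(u)` of the canonical extension of the derivation `b`
to locally Lipschitz functions: on the interior of any set where a cutoff `χ ∈ Lip_0`
equals `1`, `b(u)` agrees with `b(χ·u)`. -/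
def IsExtension (m : Measure X) (b : MDerivation X m) (u : X → ℝ) (bu : X → ℝ) : Prop :=
  AEMeasurable bu m ∧
    ∀ χ ∈ Lip0 X, ∀ᵐ x ∂m, x ∈ interior {y | χ y = 1} → bu x = b.toFun (χ * u) x

/-- `C` is an admissible continuity constant for `L_f` with respect to the `Der^q` norm. -/
def ContBound (m : Measure X) (q : ℝ≥0∞) (Lf : MDerivation X m → X → ℝ) (C : ℝ) : Prop :=
  ∀ b ∈ DerSet m q q, ∀ g, IsLocality m b g →
    ∫ x, |Lf b x| ∂m ≤ C * (eLpNorm g q m).toReal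

/-- `L_f` realizes `f` as a Sobolev function: a linear, `Der^q`-norm continuous,
`Lip_b`-linear map `L_f : Der^q_q → L^1(X,m)` with
`∫ L_f(b) dm = -∫ f · div b dm`; for `p = 1` it moreover extends `L^∞`-linearly
to `L^∞ · Der_L`. -/
structure IsSobolevRep (m : Measure X) (p q : ℝ≥0∞) (f : X → ℝ)
    (Lf : MDerivation X m → X → ℝ) : Prop where
  integrable : ∀ b ∈ DerSet m q q, Integrable (Lf b) m
  ibp : ∀ b ∈ DerSet m q q, ∀ d, IsDivergence m b d →
    ∫ x, Lf b x ∂m = -∫ x, f x * d x ∂m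
  map_add : ∀ b₁ ∈ DerSet m q q, ∀ b₂ ∈ DerSet m q q, ∀ b₃ ∈ DerSet m q q,
    (∀ g ∈ Lip0 X, b₃.toFun g =ᵐ[m] b₁.toFun g + b₂.toFun g) →
    Lf b₃ =ᵐ[m] Lf b₁ + Lf b₂
  map_smul : ∀ (c : ℝ), ∀ b₁ ∈ DerSet m q q, ∀ b₂ ∈ DerSet m q q,
    (∀ g ∈ Lip0 X, b₂.toFun g =ᵐ[m] c • b₁.toFun g) → Lf b₂ =ᵐ[m] c • Lf b₁
  bounded : ∃ C : ℝ, 0 ≤ C ∧ ContBound m q Lf C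
  lipb_linear : ∀ h ∈ LipB X, ∀ b ∈ DerSet m q q, ∀ b' ∈ DerSet m q q,
    (∀ g ∈ Lip0 X, b'.toFun g =ᵐ[m] fun x => h x * b.toFun g x) →
    Lf b' =ᵐ[m] fun x => h x * Lf b x
  extend_one : p = 1 → ∃ Lf' : MDerivation X m → X → ℝ,
    (∀ b ∈ DerSet m ∞ ∞, Lf' b =ᵐ[m] Lf b) ∧
    ∀ u : X → ℝ, MemLp u ∞ m → ∀ b ∈ DerSet m ∞ ∞, ∀ b' : MDerivation X m,
      (∀ g ∈ Lip0 X, b'.toFun g =ᵐ[m] fun x => u x * b.toFun g x) →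
      Lf' b' =ᵐ[m] fun x => u x * Lf' b x

/-- `f ∈ W^{1,p}(X,d,m)` (definition via derivations). -/
def MemW1p (m : Measure X) (p q : ℝ≥0∞) (f : X → ℝ) : Prop :=
  MemLp f p m ∧ ∃ Lf, IsSobolevRep m p q f Lf

/-- `gf` dominates `L_f`: `|b(f)| ≤ gf · |b|` `m`-a.e. for every `b ∈ Der^q_q`. -/
def IsGradientBound (m : Measure X) (q : ℝ≥0∞) (Lf : MDerivation X m → X → ℝ)
    (gf : X → ℝ) : Prop :=
  ∀ b ∈ DerSet m q q, ∀ gb, IsMinimalLocality m b gb →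
    ∀ᵐ x ∂m, |Lf b x| ≤ gf x * gb x

/-- `gf` is the `p`-weak gradient `|∇f|_p` : the `m`-a.e. least nonnegative `L^p`
function with `|b(f)| ≤ gf · |b|` for all `b ∈ Der^q_q`. -/
def IsMinimalPGradient (m : Measure X) (p q : ℝ≥0∞) (Lf : MDerivation X m → X → ℝ)
    (gf : X → ℝ) : Prop :=
  MemLp gf p m ∧ (∀ᵐ x ∂m, 0 ≤ gf x) ∧ IsGradientBound m q Lf gf ∧
    ∀ gf', MemLp gf' p m → (∀ᵐ x ∂m, 0 ≤ gf' x) → IsGradientBound m q Lf gf' →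
      ∀ᵐ x ∂m, gf x ≤ gf' x

/-- `g` is a relaxed gradient of `f`: some `f_n ∈ Lip_0` converge to `f` in `L^p` with
`lip_a f_n → g` in `L^p`. -/
def IsRelaxedGradient (m : Measure X) (p : ℝ≥0∞) (f g : X → ℝ) : Prop :=
  MemLp g p m ∧ ∃ fn : ℕ → X → ℝ, (∀ n, fn n ∈ Lip0 X) ∧
    Tendsto (fun n => eLpNorm (fn n - f) p m) atTop (𝓝 0) ∧
    Tendsto (fun n => eLpNorm (fun x => lipA (fn n) x - g x) p m) atTop (𝓝 0)

/-- `f ∈ W^{1,p}_*(X,d,m)` (relaxed Sobolev space). -/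
def MemW1pStar (m : Measure X) (p : ℝ≥0∞) (f : X → ℝ) : Prop :=
  MemLp f p m ∧ ∃ g, IsRelaxedGradient m p f g

/-- `g = |∇f|_{p,*}`: a relaxed gradient of minimal `L^p` norm. -/
def IsMinimalRelaxedGradient (m : Measure X) (p : ℝ≥0∞) (f g : X → ℝ) : Prop :=
  IsRelaxedGradient m p f g ∧
    ∀ g', IsRelaxedGradient m p f g' → eLpNorm g p m ≤ eLpNorm g' p m

end DiMarino

/-- The curve space `C([0,1],X)` is endowed with the Borel σ-algebra of the sup metric. -/
instance {X : Type*} [MetricSpace X] : MeasurableSpace C(unitInterval, X) := borel _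
instance {X : Type*} [MetricSpace X] : BorelSpace C(unitInterval, X) := ⟨rfl⟩

namespace DiMarino

variable {X : Type*} [MetricSpace X]

/-- The canonical extension of a curve `γ : [0,1] → X` to `ℝ`, constant outside `[0,1]`. -/
def extC (γ : C(unitInterval, X)) : ℝ → X :=
  fun t => γ (Set.projIcc 0 1 zero_le_one t)

/-- `γ` has metric speed `v` at time `t`. -/
def HasMetricSpeedAt (γ : ℝ → X) (t v : ℝ) : Prop :=
  Tendsto (fun h : ℝ => dist (γ (t + h)) (γ t) / |h|) (𝓝[≠] 0) (𝓝 v)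

variable [MeasurableSpace X]

/-- `π` is a `q`-test plan with compression constant `Cpi`, and `spd γ t` is
the metric speed `|γ̇_t|`: `π` is a probability measure concentrated on `AC^q`
curves, with `q`-energy `‖ ‖γ̇‖_{L^q(0,1)} ‖_{L^q(π)}` finite and
`(e_t)_♯ π ≤ Cpi · m` for all `t ∈ [0,1]`. -/
structure IsTestPlan (m : Measure X) (q : ℝ≥0∞) (π : Measure C(unitInterval, X))
    (spd : C(unitInterval, X) → ℝ → ℝ) (Cpi : ℝ≥0∞) : Prop where
  prob : IsProbabilityMeasure π
  cfin : Cpi ≠ ∞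
  spd_meas : AEMeasurable (fun p : C(unitInterval, X) × ℝ => spd p.1 p.2)
    (π.prod (volume.restrict (Set.Ioo (0:ℝ) 1)))
  spd_nonneg : ∀ᵐ γ ∂π, ∀ᵐ t ∂(volume.restrict (Set.Ioo (0:ℝ) 1)), 0 ≤ spd γ t
  speed : ∀ᵐ γ ∂π, ∀ᵐ t ∂(volume.restrict (Set.Ioo (0:ℝ) 1)),
    HasMetricSpeedAt (extC γ) t (spd γ t)
  ac : ∀ᵐ γ ∂π, (∀ s t : ℝ, 0 ≤ s → s ≤ t → t ≤ 1 →
    IntegrableOn (spd γ) (Set.Ioc s t) volume ∧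
    dist (extC γ s) (extC γ t) ≤ ∫ u in Set.Ioc s t, spd γ u)
  energy : eLpNorm
    (fun γ => (eLpNorm (spd γ) q (volume.restrict (Set.Ioo (0:ℝ) 1))).toReal) q π < ∞
  compression : ∀ t : unitInterval, Measure.map (fun γ => γ t) π ≤ Cpi • m

/-- `g` is a `p`-weak upper gradient of `f`:
`|f(γ₁) - f(γ₀)| ≤ ∫_γ g ds < ∞` for `p`-a.e. curve, i.e. π-a.e. for all `q`-test plans. -/
def IsWeakUpperGradient (m : Measure X) (q : ℝ≥0∞) (f g : X → ℝ) : Prop :=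
  ∀ (π : Measure C(unitInterval, X)) (spd : C(unitInterval, X) → ℝ → ℝ) (Cpi : ℝ≥0∞),
    IsTestPlan m q π spd Cpi →
    ∀ᵐ γ ∂π, IntegrableOn (fun t => g (extC γ t) * spd γ t) (Set.Ioo (0:ℝ) 1) volume ∧
      |f (extC γ 1) - f (extC γ 0)| ≤ ∫ t in Set.Ioo (0:ℝ) 1, g (extC γ t) * spd γ t

/-- `f ∈ W^{1,p}_w(X,d,m)` (Sobolev space via weak upper gradients). -/
def MemW1pw (m : Measure X) (p q : ℝ≥0∞) (f : X → ℝ) : Prop :=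
  MemLp f p m ∧ ∃ g, MemLp g p m ∧ (∀ᵐ x ∂m, 0 ≤ g x) ∧ IsWeakUpperGradient m q f g

/-- `g = |∇f|_{p,w}`: the `m`-a.e. minimal `p`-weak upper gradient of `f`. -/
def IsMinimalWeakUpperGradient (m : Measure X) (p q : ℝ≥0∞) (f g : X → ℝ) : Prop :=
  MemLp g p m ∧ (∀ᵐ x ∂m, 0 ≤ g x) ∧ IsWeakUpperGradient m q f g ∧
    ∀ g', MemLp g' p m → (∀ᵐ x ∂m, 0 ≤ g' x) → IsWeakUpperGradient m q f g' →
      ∀ᵐ x ∂m, g x ≤ g' x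

/-- The upper semicontinuous envelope (relative to `m`-a.e. domination by bounded
continuous functions) of `g`. -/
def uscEnvAE (m : Measure X) (g : X → ℝ) (x : X) : ℝ :=
  sInf {y : ℝ | ∃ h : X → ℝ, Continuous h ∧ (∃ M, ∀ z, |h z| ≤ M) ∧
    (∀ᵐ z ∂m, g z ≤ h z) ∧ y = h x}

/-- `ν' = h · ν` for a signed measure `ν` and a function `h`. -/
def IsDensitySM (ν' ν : SignedMeasure X) (h : X → ℝ) : Prop :=
  ∀ A : Set X, MeasurableSet A →
    ν' A = (∫ x in A, h x ∂ν.toJordanDecomposition.posPart)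
      - ∫ x in A, h x ∂ν.toJordanDecomposition.negPart

/-- `L_f` realizes `f` as a `BV` function: a linear map `L_f : Der_b → M(X)`,
continuous for the `Der^∞` norm, `C_b(X)`-linear, with
`L_f(b)(X) = -∫ f · div b dm` for all `b ∈ Der_L`. -/
structure IsBVRep (m : Measure X) (f : X → ℝ)
    (Lf : MDerivation X m → SignedMeasure X) : Prop where
  ibp : ∀ b ∈ DerSet m ∞ ∞, ∀ d, IsDivergence m b d →
    Lf b Set.univ = -∫ x, f x * d x ∂m
  map_add : ∀ b₁ ∈ DerB m, ∀ b₂ ∈ DerB m, ∀ b₃ ∈ DerB m,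
    (∀ g ∈ Lip0 X, b₃.toFun g =ᵐ[m] b₁.toFun g + b₂.toFun g) → Lf b₃ = Lf b₁ + Lf b₂
  map_smul : ∀ (c : ℝ), ∀ b₁ ∈ DerB m, ∀ b₂ ∈ DerB m,
    (∀ g ∈ Lip0 X, b₂.toFun g =ᵐ[m] c • b₁.toFun g) → Lf b₂ = c • Lf b₁
  bounded : ∃ C : ℝ, 0 ≤ C ∧ ∀ b ∈ DerB m, ∀ g, IsLocality m b g →
    ((Lf b).totalVariation Set.univ).toReal ≤ C * (eLpNorm g ∞ m).toReal
  cb_linear : ∀ h : X → ℝ, Continuous h → (∃ M, ∀ x, |h x| ≤ M) →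
    ∀ b ∈ DerB m, ∀ b' ∈ DerB m,
      (∀ g ∈ Lip0 X, b'.toFun g =ᵐ[m] fun x => h x * b.toFun g x) →
      IsDensitySM (Lf b') (Lf b) h

/-- `f ∈ BV(X,d,m)` (definition via derivations). -/
def MemBV (m : Measure X) (f : X → ℝ) : Prop :=
  MemLp f 1 m ∧ ∃ Lf, IsBVRep m f Lf

/-- `ν` is a finite measure dominating `L_f`:
`Df(b)(A) ≤ ∫_A |b|^* dν` for every Borel `A` and `b ∈ Der_L`. -/
def IsTVBound (m : Measure X) (Lf : MDerivation X m → SignedMeasure X)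
    (ν : Measure X) : Prop :=
  IsFiniteMeasure ν ∧ ∀ A : Set X, MeasurableSet A → ∀ b ∈ DerSet m ∞ ∞,
    ∀ gb, IsMinimalLocality m b gb → Lf b A ≤ ∫ x in A, uscEnvAE m gb x ∂ν

/-- `ν = |Df|`: the least finite measure dominating `L_f`. -/
def IsTotalVariation (m : Measure X) (Lf : MDerivation X m → SignedMeasure X)
    (ν : Measure X) : Prop :=
  IsTVBound m Lf ν ∧ ∀ ν', IsTVBound m Lf ν' → ν ≤ ν'

/-- `ν` is a weak-* limit, in duality with `C_b(X)`, of measures `lip_a(f_n) m` with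
`f_n ∈ Lip_0` converging to `f` in `L^1`. -/
def IsStarLimit (m : Measure X) (f : X → ℝ) (ν : Measure X) : Prop :=
  IsFiniteMeasure ν ∧ ∃ fn : ℕ → X → ℝ, (∀ n, fn n ∈ Lip0 X) ∧
    Tendsto (fun n => eLpNorm (fn n - f) 1 m) atTop (𝓝 0) ∧
    ∀ h : X → ℝ, Continuous h → (∃ M, ∀ x, |h x| ≤ M) →
      Tendsto (fun n => ∫ x, h x * lipA (fn n) x ∂m) atTop (𝓝 (∫ x, h x ∂ν))

/-- `f ∈ BV_*(X,d,m)` (relaxed BV space). -/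
def MemBVStar (m : Measure X) (f : X → ℝ) : Prop :=
  MemLp f 1 m ∧ ∃ ν, IsStarLimit m f ν

/-- `ν = |Df|_*`: the minimal relaxed total variation measure. -/
def IsMinimalStarLimit (m : Measure X) (f : X → ℝ) (ν : Measure X) : Prop :=
  IsStarLimit m f ν ∧ ∀ ν', IsStarLimit m f ν' → ν ≤ ν'

/-- The essential total variation of `f` along the curve `γ`. -/
def essVarAlong (f : X → ℝ) (γ : C(unitInterval, X)) : ℝ≥0∞ :=
  ⨅ (g : ℝ → ℝ) (_ : ∀ᵐ t ∂(volume.restrict (Set.Icc (0:ℝ) 1)), g t = f (extC γ t)),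
    eVariationOn g (Set.Icc (0:ℝ) 1)

/-- `μ` is an admissible weak total variation measure for `f` in the sense of
Ambrosio–Di Marino: along every `∞`-test plan, `f` has finite essential variation on
a.e. curve and the (localized) integrated variation is bounded by
`C(π) ‖Lip γ‖_{L^∞(π)} μ`. -/
def IsWBVMeasure (m : Measure X) (f : X → ℝ) (μ : Measure X) : Prop :=
  IsFiniteMeasure μ ∧
  ∀ (π : Measure C(unitInterval, X)) (spd : C(unitInterval, X) → ℝ → ℝ) (Cpi : ℝ≥0∞),
    IsTestPlan m ∞ π spd Cpi →
    (∀ᵐ γ ∂π, essVarAlong f γ < ∞) ∧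
    ∀ A : Set X, IsOpen A →
      ∫⁻ γ in {γ | ∀ t : unitInterval, γ t ∈ A}, essVarAlong f γ ∂π ≤
        Cpi * eLpNorm
          (fun γ => (eLpNorm (spd γ) ∞ (volume.restrict (Set.Ioo (0:ℝ) 1))).toReal) ∞ π
          * μ A

/-- `f ∈ w-BV(X,d,m)`. -/
def MemWBV (m : Measure X) (f : X → ℝ) : Prop :=
  MemLp f 1 m ∧ ∃ μ, IsWBVMeasure m f μ

/-- `μ = |Df|_w`: the minimal weak total variation measure. -/
def IsMinimalWBVMeasure (m : Measure X) (f : X → ℝ) (μ : Measure X) : Prop :=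
  IsWBVMeasure m f μ ∧ ∀ μ', IsWBVMeasure m f μ' → μ ≤ μ'
/-!
For `u ∈ Lip_0` the Leibniz rule yields the chain rule `b(P ∘ u - P 0) = P'(u) b(u)` for every
polynomial `P`. Pick polynomials `P_n` with `P_n → id` and `P_n' → 1_{t ≠ 0}`, boundedly on
the range of `u`. Integrating by parts, `∫ b(v) χ = -∫ v χ div b - ∫ v b(χ)` for `v = P_n ∘ u`
passes to the limit by dominated convergence, so `b(u) χ` has the same integral over `{u ≠ 0}`
as over `X`. Hence `∫_{u = 0} b(u) χ = 0` for all `χ ∈ Lip_0`, and these test functions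
separate integrable functions, so `b(u) = 0` a.e. on `{u = 0}`. For Lipschitz `f`, `g`, apply
this to `u = χ f - χ g` with cutoffs `χ ∈ Lip_0` equal to `1` on large balls.
-/

lemma _root_.LipschitzWith.mul_of_abs_le {X : Type*} [PseudoMetricSpace X] {f g : X → ℝ}
    {Kf Kg Mf Mg : ℝ≥0} (hf : LipschitzWith Kf f) (hg : LipschitzWith Kg g)
    (hfM : ∀ x, |f x| ≤ Mf) (hgM : ∀ x, |g x| ≤ Mg) :
    LipschitzWith (Mf * Kg + Mg * Kf) (f * g) := by
  refine LipschitzWith.of_dist_le_mul fun x y => ?_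
  have hfxy := hf.dist_le_mul x y
  have hgxy := hg.dist_le_mul x y
  simp only [Real.dist_eq, Pi.mul_apply] at hfxy hgxy ⊢
  calc |f x * g x - f y * g y| = |f x * (g x - g y) + g y * (f x - f y)| := by ring_nf
    _ ≤ |f x| * |g x - g y| + |g y| * |f x - f y| := by
        rw [← abs_mul, ← abs_mul]; exact abs_add_le _ _
    _ ≤ Mf * (Kg * dist x y) + Mg * (Kf * dist x y) := by
        gcongr
        exacts [hfM x, hgM y]
    _ = ↑(Mf * Kg + Mg * Kf) * dist x y := by push_cast; ring

lemma _root_.Polynomial.induction_on_mul_X {R : Type*} [Semiring R] {motive : Polynomial R → Prop}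
    (P : Polynomial R) (C : ∀ a, motive (Polynomial.C a))
    (add : ∀ p q, motive p → motive q → motive (p + q))
    (mul_X : ∀ p, motive p → motive (p * Polynomial.X)) : motive P :=
  Polynomial.induction_on P C add fun n a h => by
    rw [pow_succ, ← mul_assoc]; exact mul_X _ h

lemma _root_.Polynomial.eval_mul_X_comp_sub_eval_zero {α : Type*} (p : Polynomial ℝ) (u : α → ℝ) :
    (fun x => (p * Polynomial.X).eval (u x) - (p * Polynomial.X).eval 0) =
      (fun x => p.eval (u x) - p.eval 0) * u + p.eval 0 • u := by
  ext x
  simp only [Polynomial.eval_mul, Polynomial.eval_X, Pi.add_apply, Pi.mul_apply,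
    Pi.smul_apply, smul_eq_mul]
  ring

lemma succ_mul_one_sub_mul_pow_le {a : ℝ} (ha0 : 0 ≤ a) (ha1 : a ≤ 1) (n : ℕ) :
    (n + 1) * (1 - a) * a ^ n ≤ 1 - a ^ (n + 1) := by
  have hsum : ((n : ℝ) + 1) * a ^ n ≤ ∑ i ∈ Finset.range (n + 1), a ^ i := by
    simpa using Finset.card_nsmul_le_sum (Finset.range (n + 1)) (a ^ ·) (a ^ n)
      fun i hi => pow_le_pow_of_le_one ha0 ha1 (Nat.lt_succ_iff.mp (Finset.mem_range.mp hi))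
  calc (n + 1) * (1 - a) * a ^ n = (1 - a) * ((n + 1) * a ^ n) := by ring
    _ ≤ (1 - a) * ∑ i ∈ Finset.range (n + 1), a ^ i :=
        mul_le_mul_of_nonneg_left hsum (sub_nonneg.mpr ha1)
    _ = 1 - a ^ (n + 1) := mul_neg_geom_sum a (n + 1)

lemma tendsto_integral_mul_of_tendsto_of_abs_le {α : Type*} [MeasurableSpace α] {μ : Measure α}
    {F : ℕ → α → ℝ} {f g : α → ℝ} {K : ℝ} (hF : ∀ n, AEStronglyMeasurable (F n) μ)
    (hFK : ∀ n x, |F n x| ≤ K) (hlim : ∀ x, Tendsto (fun n => F n x) atTop (𝓝 (f x)))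
    (hg : Integrable g μ) :
    Tendsto (fun n => ∫ x, F n x * g x ∂μ) atTop (𝓝 (∫ x, f x * g x ∂μ)) :=
  tendsto_integral_of_dominated_convergence (fun x => K * |g x|) (fun n => (hF n).mul hg.1)
    (hg.abs.const_mul K)
    (fun n => ae_of_all _ fun x => by
      rw [norm_mul, Real.norm_eq_abs, Real.norm_eq_abs]
      exact mul_le_mul_of_nonneg_right (hFK n x) (abs_nonneg _))
    (ae_of_all _ fun x => (hlim x).mul_const (g x))

section ApproxIdPoly

/-- For `t² ≤ c`, `P_n(t) → t` while `P_n'(t)` stays bounded and tends to `1_{t ≠ 0}`. -/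
def approxIdPoly (c : ℝ) (n : ℕ) : Polynomial ℝ :=
  Polynomial.X * (1 - (1 - Polynomial.C c⁻¹ * Polynomial.X ^ 2) ^ (n + 1))

variable {c t : ℝ}

lemma eval_approxIdPoly (n : ℕ) :
    (approxIdPoly c n).eval t = t * (1 - (1 - c⁻¹ * t ^ 2) ^ (n + 1)) := by
  simp [approxIdPoly]

lemma eval_derivative_approxIdPoly (n : ℕ) :
    (Polynomial.derivative (approxIdPoly c n)).eval t =
      1 - (1 - c⁻¹ * t ^ 2) ^ (n + 1) + 2 * (c⁻¹ * t ^ 2) * ((n + 1) * (1 - c⁻¹ * t ^ 2) ^ n) := by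
  simp [approxIdPoly, Polynomial.derivative_pow]
  ring

lemma inv_mul_sq_mem_Icc (ht : t ^ 2 ≤ c) : c⁻¹ * t ^ 2 ∈ Icc 0 1 :=
  ⟨mul_nonneg (inv_nonneg.mpr ((sq_nonneg t).trans ht)) (sq_nonneg t),
    inv_mul_le_one_of_le₀ ht ((sq_nonneg t).trans ht)⟩

lemma inv_mul_sq_pos (ht : t ^ 2 ≤ c) (ht0 : t ≠ 0) : 0 < c⁻¹ * t ^ 2 :=
  mul_pos (inv_pos.mpr ((by positivity : 0 < t ^ 2).trans_le ht)) (by positivity)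

lemma abs_eval_approxIdPoly_le (ht : t ^ 2 ≤ c) (n : ℕ) : |(approxIdPoly c n).eval t| ≤ |t| := by
  rw [eval_approxIdPoly]
  obtain ⟨hs0, hs1⟩ := inv_mul_sq_mem_Icc ht
  generalize c⁻¹ * t ^ 2 = s at *
  have h0 : 0 ≤ (1 - s) ^ (n + 1) := pow_nonneg (by linarith) _
  have h1 : (1 - s) ^ (n + 1) ≤ 1 := pow_le_one₀ (by linarith) (by linarith)
  rw [abs_mul, abs_of_nonneg (sub_nonneg.mpr h1)]
  exact mul_le_of_le_one_right (abs_nonneg t) (by linarith)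

lemma abs_eval_derivative_approxIdPoly_le (ht : t ^ 2 ≤ c) (n : ℕ) :
    |(Polynomial.derivative (approxIdPoly c n)).eval t| ≤ 3 := by
  rw [eval_derivative_approxIdPoly]
  obtain ⟨hs0, hs1⟩ := inv_mul_sq_mem_Icc ht
  generalize c⁻¹ * t ^ 2 = s at *
  have key := succ_mul_one_sub_mul_pow_le (a := 1 - s) (by linarith) (by linarith) n
  have h0 : 0 ≤ (1 - s) ^ (n + 1) := pow_nonneg (by linarith) _
  have hterm : 0 ≤ (n + 1) * (1 - (1 - s)) * (1 - s) ^ n :=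
    mul_nonneg (mul_nonneg (by positivity) (by linarith)) (pow_nonneg (by linarith) _)
  rw [abs_le]
  constructor <;> nlinarith

lemma tendsto_eval_approxIdPoly (ht : t ^ 2 ≤ c) :
    Tendsto (fun n => (approxIdPoly c n).eval t) atTop (𝓝 t) := by
  simp only [eval_approxIdPoly]
  rcases eq_or_ne t 0 with rfl | ht0
  · simp
  have hs1 := (inv_mul_sq_mem_Icc ht).2
  have hs0 := inv_mul_sq_pos ht ht0
  generalize c⁻¹ * t ^ 2 = s at *
  have hpow := tendsto_pow_atTop_nhds_zero_of_lt_one (r := 1 - s) (by linarith) (by linarith)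
  convert ((hpow.mul_const (1 - s)).const_sub 1).const_mul t using 1
  · simp [pow_succ]
  · simp

lemma tendsto_eval_derivative_approxIdPoly (ht : t ^ 2 ≤ c) :
    Tendsto (fun n => (Polynomial.derivative (approxIdPoly c n)).eval t) atTop
      (𝓝 (if t = 0 then 0 else 1)) := by
  simp only [eval_derivative_approxIdPoly]
  rcases eq_or_ne t 0 with rfl | ht0
  · simp
  have hs1 := (inv_mul_sq_mem_Icc ht).2
  have hs0 := inv_mul_sq_pos ht ht0
  rw [if_neg ht0]
  generalize c⁻¹ * t ^ 2 = s at *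
  have hpow := tendsto_pow_atTop_nhds_zero_of_lt_one (r := 1 - s) (by linarith) (by linarith)
  have hnpow := tendsto_self_mul_const_pow_of_lt_one (r := 1 - s) (by linarith) (by linarith)
  convert ((hpow.mul_const (1 - s)).const_sub 1).add ((hnpow.add hpow).const_mul (2 * s)) using 1
  · ext n; ring
  · simp

end ApproxIdPoly

section Lip0

variable {X : Type*} [MetricSpace X]

lemma continuous_of_mem_lip0 {f : X → ℝ} (hf : f ∈ Lip0 X) : Continuous f :=
  hf.1.choose_spec.continuous

lemma zero_mem_lip0 : (0 : X → ℝ) ∈ Lip0 X :=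
  ⟨⟨0, LipschitzWith.const 0⟩, by simp⟩

lemma add_mem_lip0 {f g : X → ℝ} (hf : f ∈ Lip0 X) (hg : g ∈ Lip0 X) : f + g ∈ Lip0 X := by
  obtain ⟨⟨Kf, hKf⟩, hbf⟩ := hf
  obtain ⟨⟨Kg, hKg⟩, hbg⟩ := hg
  exact ⟨⟨Kf + Kg, hKf.add hKg⟩, (hbf.union hbg).subset (tsupport_add f g)⟩

lemma sub_mem_lip0 {f g : X → ℝ} (hf : f ∈ Lip0 X) (hg : g ∈ Lip0 X) : f - g ∈ Lip0 X := by
  obtain ⟨⟨Kf, hKf⟩, hbf⟩ := hf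
  obtain ⟨⟨Kg, hKg⟩, hbg⟩ := hg
  exact ⟨⟨Kf + Kg, hKf.sub hKg⟩, (hbf.union hbg).subset (tsupport_sub f g)⟩

lemma smul_mem_lip0 (c : ℝ) {f : X → ℝ} (hf : f ∈ Lip0 X) : c • f ∈ Lip0 X := by
  obtain ⟨⟨K, hK⟩, hbf⟩ := hf
  exact ⟨⟨_, (lipschitzWith_smul c).comp hK⟩,
    hbf.subset (tsupport_smul_subset_right (fun _ => c) f)⟩

lemma exists_abs_le_of_mem_lip0 {f : X → ℝ} (hf : f ∈ Lip0 X) : ∃ M : ℝ≥0, ∀ x, |f x| ≤ M := by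
  obtain ⟨⟨K, hK⟩, hbf⟩ := hf
  obtain ⟨M, hM⟩ := (hK.isBounded_image hbf).exists_norm_le
  refine ⟨M.toNNReal, fun x => ?_⟩
  by_cases hx : x ∈ tsupport f
  · exact (hM _ (mem_image_of_mem f hx)).trans (Real.le_coe_toNNReal M)
  · simp [image_eq_zero_of_notMem_tsupport hx]

lemma mul_mem_lip0_of_lipschitzWith {χ f : X → ℝ} {K : ℝ≥0} (hχ : χ ∈ Lip0 X)
    (hf : LipschitzWith K f) : χ * f ∈ Lip0 X := by
  obtain ⟨Mχ, hMχ⟩ := exists_abs_le_of_mem_lip0 hχ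
  obtain ⟨⟨Kχ, hKχ⟩, hbχ⟩ := hχ
  obtain ⟨M, hM⟩ := (hf.isBounded_image hbχ).exists_norm_le
  -- `f` is bounded on the support of `χ`, so it may be clamped there
  set fM : X → ℝ := fun x => max (-M.toNNReal) (min M.toNNReal (f x))
  have hclamp : χ * fM = χ * f := by
    ext x
    by_cases hx : x ∈ tsupport χ
    · have := abs_le.mp ((hM _ (mem_image_of_mem f hx)).trans (Real.le_coe_toNNReal M))
      simp only [Pi.mul_apply, fM, min_eq_right this.2, max_eq_right this.1]
    · simp [image_eq_zero_of_notMem_tsupport hx]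
  have hfM : ∀ x, |fM x| ≤ M.toNNReal := fun x =>
    abs_le.mpr ⟨le_max_left _ _, max_le (by simp) (min_le_left _ _)⟩
  rw [← hclamp]
  exact ⟨⟨_, hKχ.mul_of_abs_le ((hf.const_min _).const_max _) hMχ hfM⟩,
    hbχ.subset tsupport_mul_subset_left⟩

lemma mul_mem_lip0 {f g : X → ℝ} (hf : f ∈ Lip0 X) (hg : g ∈ Lip0 X) : f * g ∈ Lip0 X :=
  mul_mem_lip0_of_lipschitzWith hf hg.1.choose_spec

lemma polyComp_sub_mem_lip0 {u : X → ℝ} (hu : u ∈ Lip0 X) (P : Polynomial ℝ) :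
    (fun x => P.eval (u x) - P.eval 0) ∈ Lip0 X := by
  induction P using Polynomial.induction_on_mul_X with
  | C a =>
    simp only [Polynomial.eval_C, sub_self]
    exact zero_mem_lip0
  | add p q hp hq =>
    convert add_mem_lip0 hp hq using 1
    ext x; simp only [Polynomial.eval_add, Pi.add_apply]; ring
  | mul_X p hp =>
    rw [Polynomial.eval_mul_X_comp_sub_eval_zero]
    exact add_mem_lip0 (mul_mem_lip0 hp hu) (smul_mem_lip0 _ hu)

def lipBump (z : X) (E : Set X) (n : ℕ) (x : X) : ℝ :=
  thickenedIndicator (Nat.one_div_pos_of_nat (α := ℝ) (n := n)) (E ∩ closedBall z n) x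

lemma lipBump_mem_lip0 (z : X) (E : Set X) (n : ℕ) : lipBump z E n ∈ Lip0 X := by
  refine ⟨⟨_, (LipschitzWith.subtype_val _).comp (lipschitzWith_thickenedIndicator _ _)⟩, ?_⟩
  have hsupp : Function.support (lipBump z E n) ⊆ thickening (1 / ((n : ℝ) + 1))
      (E ∩ closedBall z n) := fun x hx => by
    by_contra h
    exact hx (by rw [lipBump, thickenedIndicator_zero _ _ h, NNReal.coe_zero])
  exact (((isBounded_closedBall.subset inter_subset_right).thickening).closure).subset
    (closure_mono hsupp)

lemma abs_lipBump_le_one (z : X) (E : Set X) (n : ℕ) (x : X) : |lipBump z E n x| ≤ 1 := by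
  rw [lipBump, abs_of_nonneg (NNReal.coe_nonneg _)]
  exact NNReal.coe_le_one.mpr (thickenedIndicator_le_one _ _ x)

lemma lipBump_eq_one {z : X} {E : Set X} {n : ℕ} {x : X} (hx : x ∈ E) (hxz : dist x z ≤ n) :
    lipBump z E n x = 1 := by
  simp [lipBump, thickenedIndicator_one _ _ (mem_inter hx (mem_closedBall.mpr hxz))]

lemma tendsto_lipBump_indicator (z : X) {E : Set X} (hE : IsClosed E) (x : X) :
    Tendsto (fun n => lipBump z E n x) atTop (𝓝 (E.indicator 1 x)) := by
  by_cases hx : x ∈ E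
  · rw [indicator_of_mem hx]
    refine tendsto_const_nhds.congr' ?_
    filter_upwards [eventually_ge_atTop ⌈dist x z⌉₊] with n hn
    exact (lipBump_eq_one hx ((Nat.le_ceil _).trans (by exact_mod_cast hn))).symm
  · rw [indicator_of_notMem hx]
    have hδ : Tendsto (fun n : ℕ => 1 / ((n : ℝ) + 1)) atTop (𝓝 0) :=
      tendsto_one_div_add_atTop_nhds_zero_nat
    refine tendsto_const_nhds.congr' ?_
    filter_upwards [hδ.eventually (eventually_notMem_cthickening_of_infEDist_pos
      (by rwa [hE.closure_eq]))] with n hn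
    refine (NNReal.coe_eq_zero.mpr (thickenedIndicator_zero _ _ fun h => hn ?_)).symm
    exact thickening_subset_cthickening _ _ (thickening_subset_of_subset _ inter_subset_left h)

end Lip0

section Measure

variable {X : Type*} [MetricSpace X] [MeasurableSpace X] {m : Measure X}

lemma Integrable.mul_lip0 [OpensMeasurableSpace X] {F χ : X → ℝ} (hF : Integrable F m)
    (hχ : χ ∈ Lip0 X) : Integrable (fun x => F x * χ x) m := by
  obtain ⟨M, hM⟩ := exists_abs_le_of_mem_lip0 hχ
  exact hF.mul_bdd (continuous_of_mem_lip0 hχ).aestronglyMeasurable (ae_of_all _ hM)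

lemma ae_eq_zero_of_forall_integral_mul_lip0_eq_zero [BorelSpace X] {F : X → ℝ}
    (hF : Integrable F m) (hFχ : ∀ χ ∈ Lip0 X, ∫ x, F x * χ x ∂m = 0) : F =ᵐ[m] 0 := by
  refine ae_eq_zero_of_forall_setIntegral_isClosed_eq_zero hF fun C hC => ?_
  rcases C.eq_empty_or_nonempty with rfl | ⟨z, -⟩
  · simp
  have hlim := tendsto_integral_mul_of_tendsto_of_abs_le
    (fun n => (continuous_of_mem_lip0 (lipBump_mem_lip0 z C n)).aestronglyMeasurable)
    (abs_lipBump_le_one z C) (tendsto_lipBump_indicator z hC) hF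
  simp_rw [mul_comm _ (F _), hFχ _ (lipBump_mem_lip0 z C _)] at hlim
  calc ∫ x in C, F x ∂m = ∫ x, F x * C.indicator 1 x ∂m := by
        rw [← integral_indicator hC.measurableSet]
        congr with x
        by_cases hx : x ∈ C <;> simp [hx]
    _ = 0 := tendsto_nhds_unique hlim tendsto_const_nhds

namespace MDerivation

variable (b : MDerivation X m) {h : X → ℝ}

lemma map_zero : b.toFun 0 =ᵐ[m] 0 := by
  filter_upwards [b.map_smul' 0 0 zero_mem_lip0] with x hx
  simpa using hx

lemma map_sub {f g : X → ℝ} (hf : f ∈ Lip0 X) (hg : g ∈ Lip0 X) :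
    b.toFun (f - g) =ᵐ[m] b.toFun f - b.toFun g := by
  have hfg : f - g = f + (-1 : ℝ) • g := by simp [sub_eq_add_neg]
  filter_upwards [hfg ▸ b.map_add' f hf _ (smul_mem_lip0 (-1) hg), b.map_smul' (-1) g hg]
    with x hadd hsmul
  rw [Pi.sub_apply, hadd, Pi.add_apply, hsmul]
  simp [sub_eq_add_neg]

lemma map_polyComp_sub {u : X → ℝ} (hu : u ∈ Lip0 X) (P : Polynomial ℝ) :
    b.toFun (fun x => P.eval (u x) - P.eval 0) =ᵐ[m]
      fun x => (Polynomial.derivative P).eval (u x) * b.toFun u x := by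
  induction P using Polynomial.induction_on_mul_X with
  | C a =>
    simp only [Polynomial.eval_C, sub_self, Polynomial.derivative_C, Polynomial.eval_zero, zero_mul]
    exact b.map_zero
  | add p q hp hq =>
    have hfun : (fun x => (p + q).eval (u x) - (p + q).eval 0) =
        (fun x => p.eval (u x) - p.eval 0) + (fun x => q.eval (u x) - q.eval 0) := by
      ext x; simp only [Polynomial.eval_add, Pi.add_apply]; ring
    filter_upwards [hfun ▸ b.map_add' _ (polyComp_sub_mem_lip0 hu p) _
      (polyComp_sub_mem_lip0 hu q), hp, hq] with x hadd hpx hqx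
    rw [hadd, Pi.add_apply, hpx, hqx, Polynomial.derivative_add, Polynomial.eval_add]
    ring
  | mul_X p hp =>
    have hpu := polyComp_sub_mem_lip0 hu p
    rw [Polynomial.eval_mul_X_comp_sub_eval_zero]
    filter_upwards [b.map_add' _ (mul_mem_lip0 hpu hu) _ (smul_mem_lip0 _ hu),
      b.leibniz' _ hpu u hu, b.map_smul' (p.eval 0) u hu, hp] with x hadd hleib hsmul hpx
    simp only [Pi.add_apply, Pi.mul_apply, Pi.smul_apply, smul_eq_mul] at hadd hleib hsmul
    rw [hadd, hleib, hsmul, hpx, Polynomial.derivative_mul, Polynomial.derivative_X]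
    simp only [Polynomial.eval_add, Polynomial.eval_mul, Polynomial.eval_X, Polynomial.eval_one]
    ring

lemma integral_map_mul_eq [OpensMeasurableSpace X] (hdiv : IsDivergence m b h) {v χ : X → ℝ}
    (hv : v ∈ Lip0 X) (hχ : χ ∈ Lip0 X) :
    ∫ x, b.toFun v x * χ x ∂m = -∫ x, v x * (h x * χ x) ∂m - ∫ x, v x * b.toFun χ x ∂m := by
  have hbv := Integrable.mul_lip0 (hdiv.2 v hv).1 hχ
  have hvbχ := Integrable.mul_lip0 (hdiv.2 χ hχ).1 hv
  have hleib : ∫ x, b.toFun (v * χ) x ∂m =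
      ∫ x, b.toFun v x * χ x ∂m + ∫ x, b.toFun χ x * v x ∂m := by
    rw [← integral_add hbv hvbχ]
    refine integral_congr_ae ?_
    filter_upwards [b.leibniz' v hv χ hχ] with x hx
    rw [hx, Pi.add_apply, Pi.mul_apply, Pi.mul_apply]
    ring
  have hdivvχ := (hdiv.2 (v * χ) (mul_mem_lip0 hv hχ)).2.2
  simp only [Pi.mul_apply] at hdivvχ
  simp only [mul_left_comm (v _), mul_comm (v _) (b.toFun χ _)]
  linarith

/-- Integrate by parts against `P_n ∘ u` and let `n → ∞`. -/
lemma integral_ite_mul_map_mul_eq [OpensMeasurableSpace X] (hdiv : IsDivergence m b h)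
    {u χ : X → ℝ} (hu : u ∈ Lip0 X) (hχ : χ ∈ Lip0 X) :
    ∫ x, (if u x = 0 then 0 else 1) * (b.toFun u x * χ x) ∂m = ∫ x, b.toFun u x * χ x ∂m := by
  obtain ⟨M, hM⟩ := exists_abs_le_of_mem_lip0 hu
  have hc : ∀ x, u x ^ 2 ≤ (M : ℝ) ^ 2 := fun x => by
    rw [← sq_abs]; exact pow_le_pow_left₀ (abs_nonneg _) (hM x) 2
  set P : ℕ → Polynomial ℝ := approxIdPoly ((M : ℝ) ^ 2)
  have hPu : ∀ n, (fun x => (P n).eval (u x)) ∈ Lip0 X := fun n => by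
    simpa [P, eval_approxIdPoly] using polyComp_sub_mem_lip0 hu (P n)
  have hbPu : ∀ n, b.toFun (fun x => (P n).eval (u x)) =ᵐ[m]
      fun x => (Polynomial.derivative (P n)).eval (u x) * b.toFun u x := fun n => by
    simpa [P, eval_approxIdPoly] using b.map_polyComp_sub hu (P n)
  have hmeas : ∀ Q : Polynomial ℝ, AEStronglyMeasurable (fun x => Q.eval (u x)) m := fun Q =>
    (Q.continuous.comp (continuous_of_mem_lip0 hu)).aestronglyMeasurable
  have hlhs := tendsto_integral_mul_of_tendsto_of_abs_le (fun n => hmeas _)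
    (fun n x => abs_eval_derivative_approxIdPoly_le (hc x) n)
    (fun x => tendsto_eval_derivative_approxIdPoly (hc x)) (Integrable.mul_lip0 (hdiv.2 u hu).1 hχ)
  have hP : ∀ {g : X → ℝ}, Integrable g m → Tendsto (fun n => ∫ x, (P n).eval (u x) * g x ∂m)
      atTop (𝓝 (∫ x, u x * g x ∂m)) := fun hg =>
    tendsto_integral_mul_of_tendsto_of_abs_le (fun n => hmeas _)
      (fun n x => (abs_eval_approxIdPoly_le (hc x) n).trans (hM x))
      (fun x => tendsto_eval_approxIdPoly (hc x)) hg
  have hrhs := (hP (hdiv.2 χ hχ).2.1).neg.sub (hP (hdiv.2 χ hχ).1)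
  rw [b.integral_map_mul_eq hdiv hu hχ]
  refine tendsto_nhds_unique (hlhs.congr fun n => ?_) hrhs
  rw [← b.integral_map_mul_eq hdiv (hPu n) hχ]
  refine integral_congr_ae ?_
  filter_upwards [hbPu n] with x hx
  rw [hx, mul_assoc]

lemma setIntegral_zeroSet_map_mul_eq_zero [OpensMeasurableSpace X] (hdiv : IsDivergence m b h)
    {u χ : X → ℝ} (hu : u ∈ Lip0 X) (hχ : χ ∈ Lip0 X) :
    ∫ x in {x | u x = 0}, b.toFun u x * χ x ∂m = 0 := by
  have hS : MeasurableSet {x | u x = 0} :=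
    (isClosed_eq (continuous_of_mem_lip0 hu) continuous_const).measurableSet
  have hcompl : ∫ x in {x | u x = 0}ᶜ, b.toFun u x * χ x ∂m =
      ∫ x, (if u x = 0 then 0 else 1) * (b.toFun u x * χ x) ∂m := by
    rw [← integral_indicator hS.compl]
    congr with x
    by_cases hx : u x = 0 <;> simp [hx]
  have hsplit := integral_add_compl hS (Integrable.mul_lip0 (hdiv.2 u hu).1 hχ)
  rw [hcompl, b.integral_ite_mul_map_mul_eq hdiv hu hχ] at hsplit
  linarith

theorem ae_eq_zero_of_eq_zero [BorelSpace X] (hdiv : IsDivergence m b h) {u : X → ℝ}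
    (hu : u ∈ Lip0 X) : ∀ᵐ x ∂m, u x = 0 → b.toFun u x = 0 := by
  have hS : MeasurableSet {x | u x = 0} :=
    (isClosed_eq (continuous_of_mem_lip0 hu) continuous_const).measurableSet
  have hzero : {x | u x = 0}.indicator (b.toFun u) =ᵐ[m] 0 := by
    refine ae_eq_zero_of_forall_integral_mul_lip0_eq_zero ((hdiv.2 u hu).1.indicator hS)
      fun χ hχ => ?_
    simp_rw [← indicator_mul_left, integral_indicator hS]
    exact b.setIntegral_zeroSet_map_mul_eq_zero hdiv hu hχ
  filter_upwards [hzero] with x hx hux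
  simpa [indicator_of_mem (show x ∈ {x | u x = 0} from hux)] using hx

theorem ae_eq_of_eq [BorelSpace X] (hdiv : IsDivergence m b h) {f g : X → ℝ}
    (hf : f ∈ Lip0 X) (hg : g ∈ Lip0 X) : ∀ᵐ x ∂m, f x = g x → b.toFun f x = b.toFun g x := by
  filter_upwards [b.ae_eq_zero_of_eq_zero hdiv (sub_mem_lip0 hf hg), b.map_sub hf hg]
    with x hzero hsub hfg
  rw [← sub_eq_zero, ← Pi.sub_apply, ← hsub]
  exact hzero (by simp [hfg])

end MDerivation

end Measure

theorem statement2_general {X : Type*} [MetricSpace X] [MeasurableSpace X] [BorelSpace X]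
    (m : MeasureTheory.Measure X)
    (b : MDerivation X m) (hb : b ∈ DDiv m)
    (f g : X → ℝ) (hf : ∃ K, LipschitzWith K f) (hg : ∃ K, LipschitzWith K g)
    (bf bg : X → ℝ) (hbf : IsExtension m b f bf) (hbg : IsExtension m b g bg) :
    ∀ᵐ x ∂m, f x = g x → bf x = bg x := by
  obtain ⟨-, h, -, hdiv⟩ := hb
  obtain ⟨Kf, hKf⟩ := hf
  obtain ⟨Kg, hKg⟩ := hg
  rcases isEmpty_or_nonempty X with hX | ⟨⟨z⟩⟩
  · exact ae_of_all _ isEmptyElim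
  set χ : ℕ → X → ℝ := lipBump z univ
  have hχ := lipBump_mem_lip0 z univ
  have hloc := fun n => b.ae_eq_of_eq hdiv (mul_mem_lip0_of_lipschitzWith (hχ n) hKf)
    (mul_mem_lip0_of_lipschitzWith (hχ n) hKg)
  filter_upwards [ae_all_iff.mpr hloc, ae_all_iff.mpr fun n => hbf.2 _ (hχ n),
    ae_all_iff.mpr fun n => hbg.2 _ (hχ n)] with x hx hfx hgx hfgx
  obtain ⟨n, hn⟩ := exists_nat_gt (dist x z)
  have hint : x ∈ interior {y | χ n y = 1} :=
    interior_maximal (fun y hy => lipBump_eq_one (mem_univ y) (mem_ball.mp hy).le) isOpen_ball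
      (mem_ball.mpr hn)
  rw [hfx n hint, hgx n hint]
  exact hx n (by simp [hfgx])

/-- (Strong locality in `D(div)`, part (i).) For `b ∈ D(div)` and
Lipschitz `f, g : X → ℝ`, one has `b(f) = b(g)` `m`-a.e. on `{f = g}`. -/
theorem statement2 {X : Type*} [MetricSpace X] [MeasurableSpace X] [BorelSpace X]
    [TopologicalSpace.SeparableSpace X] [CompleteSpace X]
    (m : MeasureTheory.Measure X)
    (hm : ∀ s : Set X, Bornology.IsBounded s → m s < ∞)
    (b : MDerivation X m) (hb : b ∈ DDiv m)
    (f g : X → ℝ) (hf : ∃ K, LipschitzWith K f) (hg : ∃ K, LipschitzWith K g)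
    (bf bg : X → ℝ) (hbf : IsExtension m b f bf) (hbg : IsExtension m b g bg) :
    ∀ᵐ x ∂m, f x = g x → bf x = bg x :=
  statement2_general m b hb f g hf hg bf bg hbf hbg

end DiMarino
end
end

section
/- Let 1 ≤ p < ∞ with conjugate exponent q. Suppose f ∈ L^p(X,m), g ∈ L^p(X,m), and there exist f_n ∈ Lip_0(X,d) with ‖f_n − f‖_{L^p} → 0 and ‖lip_a(f_n) − g‖_{L^p} → 0. Then for every b ∈ Der^q_q one has | ∫_X f · div b dm | ≤ ∫_X |b| · g dm. -/
open MeasureTheory Metric Filter Set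
open scoped ENNReal NNReal Topology

noncomputable section

namespace DiMarino

variable {X : Type*} [MetricSpace X]

variable [MeasurableSpace X]

/-! For `f_n ∈ Lip_0`, the definition of `div b` and weak locality give
`|∫ f_n · div b| = |∫ b(f_n)| ≤ ∫ |b| · lip_a f_n`. Both sides are Hölder pairings of a fixed
`L^q` function with a sequence converging in `L^p`, so the inequality passes to the limit. -/

section HolderPairing

variable {α ι : Type*} [MeasurableSpace α] {μ : Measure α} {p q : ℝ≥0∞}
  [ENNReal.HolderConjugate p q] {l : Filter ι} {v u : α → ℝ} {F : ι → α → ℝ}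

theorem eventually_integrable_mul_of_tendsto_eLpNorm (hv : MemLp v q μ) (hu : MemLp u p μ)
    (hF : ∀ i, AEStronglyMeasurable (F i) μ)
    (hlim : Tendsto (fun i => eLpNorm (F i - u) p μ) l (𝓝 0)) :
    ∀ᶠ i in l, Integrable (fun x => v x * F i x) μ := by
  filter_upwards [hlim.eventually (gt_mem_nhds ENNReal.zero_lt_top)] with i hi
  have hFi : MemLp (F i) p μ := by
    simpa using (show MemLp (F i - u) p μ from ⟨(hF i).sub hu.1, hi⟩).add hu
  exact hv.integrable_mul hFi

theorem tendsto_integral_mul_of_tendsto_eLpNorm (hv : MemLp v q μ) (hu : MemLp u p μ)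
    (hF : ∀ i, AEStronglyMeasurable (F i) μ)
    (hlim : Tendsto (fun i => eLpNorm (F i - u) p μ) l (𝓝 0)) :
    Tendsto (fun i => ∫ x, v x * F i x ∂μ) l (𝓝 (∫ x, v x * u x ∂μ)) := by
  refine tendsto_integral_of_L1' _ (hv.1.mul hu.1)
    (eventually_integrable_mul_of_tendsto_eLpNorm hv hu hF hlim) ?_
  have hbound : ∀ i, eLpNorm ((fun x => v x * F i x) - fun x => v x * u x) 1 μ ≤
      eLpNorm v q μ * eLpNorm (F i - u) p μ := fun i => by
    have hmul : ((fun x => v x * F i x) - fun x => v x * u x) = v • (F i - u) := by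
      ext x; simp [mul_sub]
    rw [hmul]
    exact eLpNorm_smul_le_mul_eLpNorm ((hF i).sub hu.1) hv.1
  have hzero : Tendsto (fun i => eLpNorm v q μ * eLpNorm (F i - u) p μ) l (𝓝 0) := by
    simpa using ENNReal.Tendsto.const_mul hlim (Or.inr hv.eLpNorm_ne_top)
  exact tendsto_of_tendsto_of_tendsto_of_le_of_le tendsto_const_nhds hzero
    (fun _ => bot_le) hbound

end HolderPairing

section LipA

variable {Y : Type*} [MetricSpace Y]

theorem lipOn_mono (f : Y → ℝ) {s t : Set Y} (h : s ⊆ t) : lipOn f s ≤ lipOn f t :=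
  iSup₂_le fun a ha => iSup₂_le fun c hc =>
    le_iSup₂_of_le a (h ha) (le_iSup₂_of_le c (h hc) le_rfl)

theorem lowerSemicontinuous_lipOn_ball (f : Y → ℝ) (r : ℝ) :
    LowerSemicontinuous fun x => lipOn f (ball x r) := by
  intro x c hc
  simp only [lipOn, lt_iSup_iff] at hc
  obtain ⟨a, ha, b, hb, hab⟩ := hc
  have hx : x ∈ ball a r ∩ ball b r := ⟨mem_ball_comm.1 ha, mem_ball_comm.1 hb⟩
  filter_upwards [(isOpen_ball.inter isOpen_ball).mem_nhds hx] with y hy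
  exact hab.trans_le
    (le_iSup₂_of_le a (mem_ball_comm.1 hy.1) (le_iSup₂_of_le b (mem_ball_comm.1 hy.2) le_rfl))

theorem iInf_lipOn_ball_eq_iInf_nat (f : Y → ℝ) (x : Y) :
    ⨅ (r : ℝ) (_ : 0 < r), lipOn f (ball x r) = ⨅ n : ℕ, lipOn f (ball x (1 / (n + 1))) := by
  refine le_antisymm (le_iInf fun n => iInf₂_le _ Nat.one_div_pos_of_nat) (le_iInf₂ fun r hr => ?_)
  obtain ⟨n, hn⟩ := exists_nat_one_div_lt hr
  exact (iInf_le _ n).trans (lipOn_mono f (ball_subset_ball hn.le))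

theorem measurable_lipA [MeasurableSpace Y] [OpensMeasurableSpace Y] (f : Y → ℝ) :
    Measurable (lipA f) := by
  unfold lipA
  simp_rw [iInf_lipOn_ball_eq_iInf_nat]
  exact ENNReal.measurable_toReal.comp
    (Measurable.iInf fun n => (lowerSemicontinuous_lipOn_ball f _).measurable)

end LipA

section Derivations

variable {m : Measure X} {b : MDerivation X m}

theorem IsMinimalLocality.memLp {gb : X → ℝ} {q r : ℝ≥0∞} (hgb : IsMinimalLocality m b gb)
    (hb : b ∈ DerSet m q r) : MemLp gb q m := by
  obtain ⟨⟨g, hg, hgq⟩, -⟩ := hb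
  refine hgq.mono hgb.1.1.aestronglyMeasurable ?_
  filter_upwards [hgb.2 g hg, hgb.1.2.1] with x hle hnonneg
  simpa [abs_of_nonneg hnonneg] using hle.trans (le_abs_self _)

theorem IsDivergence.abs_integral_mul_le {d gb f : X → ℝ} (hd : IsDivergence m b d)
    (hgb : IsLocality m b gb) (hf : f ∈ Lip0 X)
    (hint : Integrable (fun x => gb x * lipA f x) m) :
    |∫ x, d x * f x ∂m| ≤ ∫ x, gb x * lipA f x ∂m := by
  rw [← (hd.2 f hf).2.2, abs_neg]
  exact norm_integral_le_of_norm_le (f := b.toFun f) hint (hgb.2.2 f hf)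

end Derivations

theorem statement8_general {X : Type*} [MetricSpace X] [MeasurableSpace X] [BorelSpace X]
    (m : MeasureTheory.Measure X)
    (p q : ℝ≥0∞) (hpq : 1 / p + 1 / q = 1)
    (f g : X → ℝ) (hf : MemLp f p m) (hg : MemLp g p m)
    (fn : ℕ → X → ℝ) (hfn : ∀ n, fn n ∈ Lip0 X)
    (hconv : Filter.Tendsto (fun n => eLpNorm (fn n - f) p m) Filter.atTop (nhds 0))
    (hlip : Filter.Tendsto (fun n => eLpNorm (fun x => lipA (fn n) x - g x) p m)
      Filter.atTop (nhds 0))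
    (b : MDerivation X m) (hb : b ∈ DerSet m q q)
    (d : X → ℝ) (hdmem : MemLp d q m) (hd : IsDivergence m b d)
    (gb : X → ℝ) (hgb : IsMinimalLocality m b gb) :
    |∫ x, f x * d x ∂m| ≤ ∫ x, gb x * g x ∂m := by
  have : ENNReal.HolderConjugate p q :=
    ENNReal.holderConjugate_iff.2 (by simpa only [one_div] using hpq)
  have hgbq : MemLp gb q m := hgb.memLp hb
  have hfn_meas : ∀ n, AEStronglyMeasurable (fn n) m := fun n =>
    (hfn n).1.choose_spec.continuous.aestronglyMeasurable
  have hlip_meas : ∀ n, AEStronglyMeasurable (lipA (fn n)) m := fun n =>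
    (measurable_lipA _).aestronglyMeasurable
  have hleft : Tendsto (fun n => ∫ x, d x * fn n x ∂m) atTop (𝓝 (∫ x, d x * f x ∂m)) :=
    tendsto_integral_mul_of_tendsto_eLpNorm hdmem hf hfn_meas hconv
  have hright : Tendsto (fun n => ∫ x, gb x * lipA (fn n) x ∂m) atTop
      (𝓝 (∫ x, gb x * g x ∂m)) :=
    tendsto_integral_mul_of_tendsto_eLpNorm hgbq hg hlip_meas hlip
  have hbound : ∀ᶠ n in atTop, |∫ x, d x * fn n x ∂m| ≤ ∫ x, gb x * lipA (fn n) x ∂m :=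
    (eventually_integrable_mul_of_tendsto_eLpNorm hgbq hg hlip_meas hlip).mono fun n hn =>
      hd.abs_integral_mul_le hgb.1 (hfn n) hn
  simp_rw [mul_comm (f _)]
  exact le_of_tendsto_of_tendsto hleft.abs hright hbound

/-- If `f_n ∈ Lip_0` converge to `f` in `L^p` with
`lip_a f_n → g` in `L^p`, then `|∫ f · div b dm| ≤ ∫ |b| · g dm` for every
`b ∈ Der^q_q`. -/
theorem statement8 {X : Type*} [MetricSpace X] [MeasurableSpace X] [BorelSpace X]
    [TopologicalSpace.SeparableSpace X] [CompleteSpace X]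
    (m : MeasureTheory.Measure X)
    (hm : ∀ s : Set X, Bornology.IsBounded s → m s < ∞)
    (p q : ℝ≥0∞) (hp1 : 1 ≤ p) (hpt : p ≠ ∞) (hpq : 1 / p + 1 / q = 1)
    (f g : X → ℝ) (hf : MemLp f p m) (hg : MemLp g p m)
    (fn : ℕ → X → ℝ) (hfn : ∀ n, fn n ∈ Lip0 X)
    (hconv : Filter.Tendsto (fun n => eLpNorm (fn n - f) p m) Filter.atTop (nhds 0))
    (hlip : Filter.Tendsto (fun n => eLpNorm (fun x => lipA (fn n) x - g x) p m)
      Filter.atTop (nhds 0))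
    (b : MDerivation X m) (hb : b ∈ DerSet m q q)
    (d : X → ℝ) (hdmem : MemLp d q m) (hd : IsDivergence m b d)
    (gb : X → ℝ) (hgb : IsMinimalLocality m b gb) :
    |∫ x, f x * d x ∂m| ≤ ∫ x, gb x * g x ∂m :=
  statement8_general m p q hpq f g hf hg fn hfn hconv hlip b hb d hdmem hd gb hgb

end DiMarino
end
end
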